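/- arXiv:2412.17369 — 3 statements merged into one kernel-verified Lean document; each statement's English description precedes it below -/
import Mathlib

section
/- Let ρ_∞(s, pˢ, ε) = exp(−β H(e^{ε/3}s, e^{−ε/3}pˢ, e^{ε})) · e^{ε}. Then the ε-part of the stationarity condition holds: −∂_ε[−λ(e^{ε} ∂_V H − β⁻¹) ρ_∞] + λβ⁻¹ ∂²_ε ρ_∞ = 0, where ∂_V H is evaluated at V = e^{ε} holding s, pˢ fixed. -/
/-- The ε-part of the stationarity condition for the NPT Fokker–Planck equation:
with ρ_∞(ε) = exp(−βH(e^ε))·e^ε (s, pˢ held fixed inside H), one has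
−∂_ε[−λ(e^ε ∂_V H − β⁻¹) ρ_∞] + λβ⁻¹ ∂²_ε ρ_∞ = 0. -/
theorem stmt_8 (H : ℝ → ℝ) (hH : ContDiff ℝ 2 H) (β lam : ℝ)
    (hβ : 0 < β) (hlam : 0 < lam) (ε : ℝ) :
    -(deriv (fun e => -lam * (Real.exp e * deriv H (Real.exp e) - β⁻¹)
          * (Real.exp (-β * H (Real.exp e)) * Real.exp e)) ε)
      + lam * β⁻¹
        * deriv (deriv (fun e => Real.exp (-β * H (Real.exp e)) * Real.exp e)) ε = 0 := by
  have hH1 : Differentiable ℝ H := hH.differentiable (by norm_num)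
  have hH' : Differentiable ℝ (deriv H) :=
    ((contDiff_succ_iff_deriv.mp (show ContDiff ℝ (1+1) H by norm_num; exact hH)).2.2).differentiable one_ne_zero
  set ρ : ℝ → ℝ := fun e => Real.exp (-β * H (Real.exp e)) * Real.exp e with hρ
  have hdiff : ∀ e, HasDerivAt ρ ((1 - β * Real.exp e * deriv H (Real.exp e)) * ρ e) e := by
    intro e
    have h1 : HasDerivAt (fun e : ℝ => Real.exp e) (Real.exp e) e := Real.hasDerivAt_exp e
    have h2 : HasDerivAt (fun e => H (Real.exp e)) (deriv H (Real.exp e) * Real.exp e) e :=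
      (hH1 (Real.exp e)).hasDerivAt.comp e h1
    have h3 := (h2.const_mul (-β)).exp
    have h4 := h3.mul h1
    refine h4.congr_deriv ?_
    simp only [hρ]
    ring
  have hderivρ : deriv ρ = fun e => (1 - β * Real.exp e * deriv H (Real.exp e)) * ρ e :=
    funext fun e => (hdiff e).deriv
  have hρdiff : Differentiable ℝ ρ := fun e => (hdiff e).differentiableAt
  have hdd : Differentiable ℝ (deriv ρ) := by
    rw [hderivρ]
    exact ((differentiable_const (1 : ℝ)).sub
      (((differentiable_const β).mul Real.differentiable_exp).mul
        (hH'.comp Real.differentiable_exp))).mul hρdiff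
  have key : (fun e => -lam * (Real.exp e * deriv H (Real.exp e) - β⁻¹) * ρ e)
      = fun e => lam * β⁻¹ * deriv ρ e := by
    funext e
    rw [(hdiff e).deriv]
    field_simp
    ring
  rw [key, deriv_const_mul _ (hdd ε)]
  ring
end

section
/- Let A₁,…,A_n be bounded linear operators on a Banach space. Then the symmetric composition e^{(Δt/2)A₁}⋯e^{(Δt/2)A_{n-1}} e^{ΔtA_n} e^{(Δt/2)A_{n-1}}⋯e^{(Δt/2)A₁} equals e^{Δt(A₁+⋯+A_n)} + O(Δt³) as Δt → 0. -/
set_option synthInstance.maxHeartbeats 1000000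
set_option maxHeartbeats 2000000

open NormedSpace

/-- The symmetric (Strang-type) composition
e^{(Δt/2)A₁}⋯e^{(Δt/2)A_{n-1}} e^{ΔtA_n} e^{(Δt/2)A_{n-1}}⋯e^{(Δt/2)A₁}
built from a list of operators [A₁, …, A_n]. -/
noncomputable def symStrang {E : Type*} [NormedAddCommGroup E] [NormedSpace ℝ E]
    [CompleteSpace E] : List (E →L[ℝ] E) → ℝ → (E →L[ℝ] E)
  | [], _ => 1
  | [A], Δt => NormedSpace.exp (Δt • A)
  | A :: B :: rest, Δt =>
      NormedSpace.exp ((Δt/2) • A) * symStrang (B :: rest) Δt * NormedSpace.exp ((Δt/2) • A)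

section aux

variable {E : Type*} [NormedAddCommGroup E] [NormedSpace ℝ E] [CompleteSpace E]

lemma norm_add4_le {F : Type*} [SeminormedAddGroup F] (w x y z : F) :
    ‖w + x + y + z‖ ≤ ‖w‖ + ‖x‖ + ‖y‖ + ‖z‖ := by
  calc ‖w + x + y + z‖ ≤ ‖w + x + y‖ + ‖z‖ := norm_add_le _ _
    _ ≤ ‖w + x‖ + ‖y‖ + ‖z‖ := by gcongr; exact norm_add_le _ _
    _ ≤ ‖w‖ + ‖x‖ + ‖y‖ + ‖z‖ := by gcongr; exact norm_add_le _ _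

lemma exp_taylor2 (A : E →L[ℝ] E) {t : ℝ} (ht : |t| ≤ 1) :
    ‖NormedSpace.exp (t • A) - (1 + t • A + (t^2/2) • (A*A))‖ ≤ Real.exp ‖A‖ * |t|^3 := by
  set f : ℕ → (E →L[ℝ] E) := fun n => ((Nat.factorial n : ℝ)⁻¹ * t^n) • A^n with hfdef
  have hf : HasSum f (NormedSpace.exp (t • A)) := by
    have h := exp_series_hasSum_exp' (𝕂 := ℝ) (t • A)
    have hfe : f = fun n => ((Nat.factorial n : ℝ)⁻¹) • (t • A) ^ n := by
      funext n
      simp [hfdef, smul_pow, smul_smul]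
    rw [hfe]; exact h
  have hsum3 : ∑ n ∈ Finset.range 3, f n = 1 + t • A + (t^2/2) • (A*A) := by
    simp only [hfdef, Finset.sum_range_succ, Finset.sum_range_zero, zero_add,
      pow_zero, pow_one, pow_two, Nat.factorial]
    norm_num
    module
  have hshift : ∑' n, f (n + 3) = NormedSpace.exp (t • A) - ∑ n ∈ Finset.range 3, f n := by
    have h := Summable.sum_add_tsum_nat_add (f := f) 3 hf.summable
    rw [hf.tsum_eq, add_comm] at h
    exact eq_sub_of_add_eq h
  have hb : ∀ n : ℕ, ‖f (n + 3)‖ ≤ |t|^3 * (‖A‖^(n+3) / ((n+3).factorial : ℝ)) := by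
    intro n
    have hA : ‖A ^ (n+3)‖ ≤ ‖A‖^(n+3) := norm_pow_le' A (by positivity)
    have hfc : (0:ℝ) < ((n+3).factorial : ℝ) := by exact_mod_cast (Nat.factorial_pos (n+3))
    have htp : |t|^(n+3) ≤ |t|^3 :=
      pow_le_pow_of_le_one (abs_nonneg t) ht (by omega)
    have : ‖f (n+3)‖ = (((n+3).factorial : ℝ)⁻¹ * |t|^(n+3)) * ‖A ^ (n+3)‖ := by
      rw [hfdef, norm_smul (((n+3).factorial : ℝ)⁻¹ * t^(n+3)) (A^(n+3)), Real.norm_eq_abs, abs_mul, abs_inv, abs_pow,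
        Nat.abs_cast]
    rw [this]
    have h1 : (((n+3).factorial : ℝ)⁻¹ * |t|^(n+3)) * ‖A ^ (n+3)‖
        ≤ (((n+3).factorial : ℝ)⁻¹ * |t|^3) * ‖A‖^(n+3) := by
      apply mul_le_mul _ hA (norm_nonneg _) (by positivity)
      exact mul_le_mul_of_nonneg_left htp (by positivity)
    refine h1.trans (le_of_eq ?_)
    field_simp
  have hsummable : Summable (fun n : ℕ => |t|^3 * (‖A‖^(n+3) / ((n+3).factorial : ℝ))) := by
    apply Summable.mul_left
    exact ((summable_nat_add_iff 3).mpr (Real.summable_pow_div_factorial ‖A‖))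
  have hnorm : Summable fun n : ℕ => ‖f (n + 3)‖ :=
    Summable.of_nonneg_of_le (fun n => norm_nonneg _) hb hsummable
  have htail : ∑' n : ℕ, ‖A‖^(n+3) / ((n+3).factorial : ℝ) ≤ Real.exp ‖A‖ := by
    have hs := Real.summable_pow_div_factorial ‖A‖
    have h := Summable.sum_add_tsum_nat_add (f := fun n => ‖A‖^n / ((n).factorial : ℝ)) 3 hs
    have hexp : ∑' n : ℕ, ‖A‖^n / ((n).factorial : ℝ) = Real.exp ‖A‖ := by
      rw [Real.exp_eq_exp_ℝ, exp_eq_tsum_div]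
    have hpos : (0:ℝ) ≤ ∑ n ∈ Finset.range 3, ‖A‖^n / ((n).factorial : ℝ) := by
      apply Finset.sum_nonneg
      intro i _
      positivity
    rw [hexp] at h
    linarith
  calc ‖NormedSpace.exp (t • A) - (1 + t • A + (t^2/2) • (A*A))‖
      = ‖∑' n, f (n + 3)‖ := by rw [hshift, hsum3]
    _ ≤ ∑' n, ‖f (n + 3)‖ := norm_tsum_le_tsum_norm hnorm
    _ ≤ ∑' n : ℕ, |t|^3 * (‖A‖^(n+3) / ((n+3).factorial : ℝ)) := Summable.tsum_le_tsum hb hnorm hsummable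
    _ = |t|^3 * ∑' n : ℕ, ‖A‖^(n+3) / ((n+3).factorial : ℝ) := tsum_mul_left
    _ ≤ |t|^3 * Real.exp ‖A‖ := by
        apply mul_le_mul_of_nonneg_left htail (by positivity)
    _ = Real.exp ‖A‖ * |t|^3 := mul_comm _ _

lemma norm_one_le : ‖(1 : E →L[ℝ] E)‖ ≤ 1 := by
  rw [ContinuousLinearMap.one_def]
  exact ContinuousLinearMap.norm_id_le

/-- norm of quadratic approximant -/
lemma norm_quad_le (a : E →L[ℝ] E) {c₁ c₂ : ℝ} (h₁ : |c₁| ≤ 1) (h₂ : |c₂| ≤ 1) :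
    ‖(1 : E →L[ℝ] E) + c₁ • a + c₂ • (a*a)‖ ≤ 1 + ‖a‖ + ‖a‖^2 := by
  have hmul : ‖a * a‖ ≤ ‖a‖ * ‖a‖ := norm_mul_le a a
  have h1 : ‖(1 : E →L[ℝ] E) + c₁ • a + c₂ • (a*a)‖
      ≤ ‖(1 : E →L[ℝ] E)‖ + ‖c₁ • a‖ + ‖c₂ • (a*a)‖ := norm_add₃_le
  have h2 : ‖c₁ • a‖ ≤ ‖a‖ := by
    rw [norm_smul c₁ a, Real.norm_eq_abs]
    calc |c₁| * ‖a‖ ≤ 1 * ‖a‖ := mul_le_mul_of_nonneg_right h₁ (norm_nonneg _)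
      _ = ‖a‖ := one_mul _
  have h3 : ‖c₂ • (a*a)‖ ≤ ‖a‖^2 := by
    rw [norm_smul c₂ (a*a), Real.norm_eq_abs]
    calc |c₂| * ‖a*a‖ ≤ 1 * (‖a‖ * ‖a‖) := by
          apply mul_le_mul h₂ hmul (norm_nonneg _) zero_le_one
      _ = ‖a‖^2 := by ring
  have := norm_one_le (E := E)
  linarith

lemma strang_poly (l : List (E →L[ℝ] E)) :
    ∃ C : ℝ, 0 < C ∧ ∀ t : ℝ, |t| ≤ 1 →
      ‖symStrang l t - ((1 : E →L[ℝ] E) + t • l.sum + (t^2/2) • (l.sum * l.sum))‖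
        ≤ C * |t|^3 := by
  induction l with
  | nil =>
      refine ⟨1, one_pos, fun t ht => ?_⟩
      simp [symStrang]
  | cons A l ih =>
      cases l with
      | nil =>
          refine ⟨Real.exp ‖A‖, Real.exp_pos _, fun t ht => ?_⟩
          simpa [symStrang] using exp_taylor2 A ht
      | cons B rest =>
          obtain ⟨C₁, hC₁pos, hC₁⟩ := ih
          set a := A with ha
          set s := (B :: rest).sum with hs
          -- degree ≥ 3 remainder operators
          set r3 : E →L[ℝ] E := (4⁻¹:ℝ) • (a*(s*s)) + (8⁻¹:ℝ) • (a*(a*s)) + (4⁻¹:ℝ) • (s*(s*a))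
              + (4⁻¹:ℝ) • (a*(s*a)) + (8⁻¹:ℝ) • (s*(a*a)) + (8⁻¹:ℝ) • (a*(a*a)) with hr3
          set r4 : E →L[ℝ] E := (16⁻¹:ℝ) • (a*(a*(s*s))) + (16⁻¹:ℝ) • (s*(s*(a*a)))
              + (16⁻¹:ℝ) • (a*(s*(a*a))) + (8⁻¹:ℝ) • (a*(s*(s*a)))
              + (16⁻¹:ℝ) • (a*(a*(s*a))) + (64⁻¹:ℝ) • (a*(a*(a*a))) with hr4
          set r5 : E →L[ℝ] E := (32⁻¹:ℝ) • (a*(a*(s*(s*a)))) + (32⁻¹:ℝ) • (a*(s*(s*(a*a))))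
              + (64⁻¹:ℝ) • (a*(a*(s*(a*a)))) with hr5
          set r6 : E →L[ℝ] E := (128⁻¹:ℝ) • (a*(a*(s*(s*(a*a))))) with hr6
          set Ca : ℝ := Real.exp ‖a‖ with hCa
          set Kp : ℝ := 1 + ‖a‖ + ‖a‖^2 with hKp
          set Kq : ℝ := 1 + ‖s‖ + ‖s‖^2 with hKq
          set Km : ℝ := Kq + C₁ with hKm
          set Kx : ℝ := Kp + Ca with hKx
          set KR : ℝ := ‖r3‖ + ‖r4‖ + ‖r5‖ + ‖r6‖ with hKR
          have hCa0 : 0 < Ca := Real.exp_pos _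
          have hKp0 : 0 < Kp := by positivity
          have hKq0 : 0 < Kq := by positivity
          have hKm0 : 0 < Km := by positivity
          have hKx0 : 0 < Kx := by positivity
          have hKR0 : 0 ≤ KR := by positivity
          have hCpos : 0 < Ca*Km*Kx + Kp*C₁*Kx + Kp*Kq*Ca + KR := by
            have h1 := mul_pos (mul_pos hCa0 hKm0) hKx0
            have h2 := mul_pos (mul_pos hKp0 hC₁pos) hKx0
            have h3 := mul_pos (mul_pos hKp0 hKq0) hCa0
            linarith
          refine ⟨Ca*Km*Kx + Kp*C₁*Kx + Kp*Kq*Ca + KR, hCpos, fun t ht => ?_⟩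
          have ht3 : |t|^3 ≤ 1 := pow_le_one₀ (abs_nonneg t) ht
          have ht30 : 0 ≤ |t|^3 := by positivity
          set x : E →L[ℝ] E := NormedSpace.exp ((t/2) • a) with hx
          set p : E →L[ℝ] E := 1 + (t/2) • a + (t^2/8) • (a*a) with hp
          set m : E →L[ℝ] E := symStrang (B :: rest) t with hm
          set q : E →L[ℝ] E := 1 + t • s + (t^2/2) • (s*s) with hq
          set e : E →L[ℝ] E := 1 + t • (a+s) + (t^2/2) • ((a+s)*(a+s)) with he
          have ht2 : |t/2| ≤ 1 := by
            rw [abs_div]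
            rw [abs_of_pos (by norm_num : (0:ℝ) < 2)]
            linarith [abs_nonneg t, ht]
          have h_xp : ‖x - p‖ ≤ Ca * |t|^3 := by
            have h := exp_taylor2 a ht2
            have heq : ((t/2)^2/2) = t^2/8 := by ring
            rw [heq] at h
            refine h.trans ?_
            have : |t/2|^3 ≤ |t|^3 := by
              apply pow_le_pow_left₀ (abs_nonneg _)
              rw [abs_div, abs_of_pos (by norm_num : (0:ℝ) < 2)]
              linarith [abs_nonneg t]
            exact mul_le_mul_of_nonneg_left this hCa0.le
          have h_mq : ‖m - q‖ ≤ C₁ * |t|^3 := hC₁ t ht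
          have h_p : ‖p‖ ≤ Kp := by
            apply norm_quad_le a ht2
            rw [abs_of_nonneg (by positivity : (0:ℝ) ≤ t^2/8)]
            nlinarith [sq_abs t, abs_nonneg t]
          have h_q : ‖q‖ ≤ Kq := by
            apply norm_quad_le s ht
            rw [abs_of_nonneg (by positivity : (0:ℝ) ≤ t^2/2)]
            nlinarith [sq_abs t, abs_nonneg t]
          have h_m : ‖m‖ ≤ Km := by
            calc ‖m‖ = ‖q + (m - q)‖ := by congr 1; abel
              _ ≤ ‖q‖ + ‖m - q‖ := norm_add_le _ _
              _ ≤ Kq + C₁ * |t|^3 := add_le_add h_q h_mq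
              _ ≤ Kq + C₁ := by nlinarith
          have h_x : ‖x‖ ≤ Kx := by
            calc ‖x‖ = ‖p + (x - p)‖ := by congr 1; abel
              _ ≤ ‖p‖ + ‖x - p‖ := norm_add_le _ _
              _ ≤ Kp + Ca * |t|^3 := add_le_add h_p h_xp
              _ ≤ Kp + Ca := by nlinarith
          have hid : p * q * p - e = t^3 • r3 + t^4 • r4 + t^5 • r5 + t^6 • r6 := by
            rw [hp, hq, he, hr3, hr4, hr5, hr6]
            simp only [mul_add, add_mul, smul_mul_assoc, mul_smul_comm, smul_add,
              smul_smul, mul_one, one_mul, mul_assoc]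
            module
          have h_pqp : ‖p * q * p - e‖ ≤ KR * |t|^3 := by
            rw [hid]

            have bk : ∀ (k : ℕ) (r : E →L[ℝ] E), 3 ≤ k → ‖t^k • r‖ ≤ ‖r‖ * |t|^3 := by
              intro k r hk
              rw [norm_smul (t^k) r, Real.norm_eq_abs, abs_pow, mul_comm]
              apply mul_le_mul_of_nonneg_left _ (norm_nonneg r)
              exact pow_le_pow_of_le_one (abs_nonneg t) ht hk
            calc ‖t^3 • r3 + t^4 • r4 + t^5 • r5 + t^6 • r6‖
                ≤ ‖t^3 • r3‖ + ‖t^4 • r4‖ + ‖t^5 • r5‖ + ‖t^6 • r6‖ :=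
                  norm_add4_le _ _ _ _
              _ ≤ ‖r3‖*|t|^3 + ‖r4‖*|t|^3 + ‖r5‖*|t|^3 + ‖r6‖*|t|^3 := by
                  refine add_le_add (add_le_add (add_le_add ?_ ?_) ?_) ?_ <;>
                    exact bk _ _ (by norm_num)
              _ = KR * |t|^3 := by rw [hKR]; ring
          have hdecomp : x * m * x - e
              = (x - p) * m * x + p * (m - q) * x + (p * q) * (x - p) + (p * q * p - e) := by
            noncomm_ring
          have hsym : symStrang (A :: B :: rest) t = x * m * x := by
            rw [hx, hm]
            simp [symStrang, ha]
          have hsum : (A :: B :: rest).sum = a + s := by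
            rw [ha, hs, List.sum_cons]
          rw [hsym, hsum]
          have hE : ((1 : E →L[ℝ] E) + t • (a+s) + (t^2/2) • ((a+s)*(a+s))) = e := he.symm
          rw [hE, hdecomp]
          have e1 : ‖(x - p) * m * x‖ ≤ (Ca * Km * Kx) * |t|^3 := by
            calc ‖(x - p) * m * x‖ ≤ ‖(x-p)*m‖ * ‖x‖ := norm_mul_le _ _
              _ ≤ ‖x-p‖ * ‖m‖ * ‖x‖ :=
                  mul_le_mul_of_nonneg_right (norm_mul_le _ _) (norm_nonneg _)
              _ ≤ (Ca * |t|^3) * Km * Kx := by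
                  apply mul_le_mul (mul_le_mul h_xp h_m (norm_nonneg _) (by positivity))
                    h_x (norm_nonneg _) (by positivity)
              _ = (Ca * Km * Kx) * |t|^3 := by ring
          have e2 : ‖p * (m - q) * x‖ ≤ (Kp * C₁ * Kx) * |t|^3 := by
            calc ‖p * (m - q) * x‖ ≤ ‖p*(m-q)‖ * ‖x‖ := norm_mul_le _ _
              _ ≤ ‖p‖ * ‖m-q‖ * ‖x‖ :=
                  mul_le_mul_of_nonneg_right (norm_mul_le _ _) (norm_nonneg _)
              _ ≤ (Kp * (C₁ * |t|^3)) * Kx := by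
                  apply mul_le_mul (mul_le_mul h_p h_mq (norm_nonneg _) (by positivity))
                    h_x (norm_nonneg _) (by positivity)
              _ = (Kp * C₁ * Kx) * |t|^3 := by ring
          have e3 : ‖(p * q) * (x - p)‖ ≤ (Kp * Kq * Ca) * |t|^3 := by
            calc ‖(p*q) * (x - p)‖ ≤ ‖p*q‖ * ‖x-p‖ := norm_mul_le _ _
              _ ≤ ‖p‖ * ‖q‖ * ‖x-p‖ :=
                  mul_le_mul_of_nonneg_right (norm_mul_le _ _) (norm_nonneg _)
              _ ≤ (Kp * Kq) * (Ca * |t|^3) := by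
                  apply mul_le_mul (mul_le_mul h_p h_q (norm_nonneg _) hKp0.le)
                    h_xp (norm_nonneg _) (by positivity)
              _ = (Kp * Kq * Ca) * |t|^3 := by ring
          calc ‖(x - p) * m * x + p * (m - q) * x + (p * q) * (x - p) + (p * q * p - e)‖
              ≤ ‖(x - p) * m * x‖ + ‖p * (m - q) * x‖ + ‖(p*q)*(x-p)‖ + ‖p*q*p - e‖ :=
                norm_add4_le _ _ _ _
            _ ≤ (Ca*Km*Kx)*|t|^3 + (Kp*C₁*Kx)*|t|^3 + (Kp*Kq*Ca)*|t|^3 + KR*|t|^3 :=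
                add_le_add (add_le_add (add_le_add e1 e2) e3) h_pqp
            _ = (Ca*Km*Kx + Kp*C₁*Kx + Kp*Kq*Ca + KR) * |t|^3 := by ring

end aux

/-- The symmetric composition of exponentials of bounded operators A₁,…,A_n
equals e^{Δt(A₁+⋯+A_n)} + O(Δt³) as Δt → 0. -/
theorem stmt_11 (E : Type*) [NormedAddCommGroup E] [NormedSpace ℝ E] [CompleteSpace E]
    (l : List (E →L[ℝ] E)) :
    ∃ C δ : ℝ, 0 < C ∧ 0 < δ ∧ ∀ Δt : ℝ, |Δt| ≤ δ →
      ‖symStrang l Δt - NormedSpace.exp (Δt • l.sum)‖ ≤ C * |Δt|^3 := by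
  obtain ⟨C, hCpos, hC⟩ := strang_poly l
  refine ⟨C + Real.exp ‖l.sum‖, 1, by positivity, one_pos, fun t ht => ?_⟩
  have h1 := hC t ht
  have h2 := exp_taylor2 l.sum ht
  calc ‖symStrang l t - NormedSpace.exp (t • l.sum)‖
      ≤ ‖symStrang l t - ((1 : E →L[ℝ] E) + t • l.sum + (t^2/2) • (l.sum * l.sum))‖
        + ‖NormedSpace.exp (t • l.sum) - ((1 : E →L[ℝ] E) + t • l.sum + (t^2/2) • (l.sum * l.sum))‖ := by
        rw [← norm_neg (NormedSpace.exp (t • l.sum) - _)]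
        refine le_trans (le_of_eq ?_) (norm_add_le _ _)
        congr 1
        abel
    _ ≤ C * |t|^3 + Real.exp ‖l.sum‖ * |t|^3 := add_le_add h1 h2
    _ = (C + Real.exp ‖l.sum‖) * |t|^3 := by ring
end

section
/- Under the Smoluchowski–Kramers friction γ(V) = 1/(λV²), the drift b of the enthalpy H along the dynamics satisfies: if V²|∂²H/∂V²| ≤ (β/3)V²(∂H/∂V)² + C(H+1) and V ≥ V_δ, then b ≤ −(λ/3)V²(∂H/∂V)² + C'(H+1) − V^{2/3}(∂H/∂pˢ)·γm(∂H/∂pˢ), where b = −λV²[(∂H/∂V)² − β⁻¹∂²H/∂V²] + 2λβ⁻¹V ∂H/∂V − V^{2/3}(∂H/∂pˢ)·γm(∂H/∂pˢ) + (3/β)Σᵢγᵢ. -/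
/-- Lyapunov drift estimate for the enthalpy under γ(V) = 1/(λV²): if
V²|∂²H/∂V²| ≤ (β/3)V²(∂H/∂V)² + C(H+1) and V ≥ V_δ, then the drift
b = −λV²[(∂H/∂V)² − β⁻¹∂²H/∂V²] + 2λβ⁻¹V∂H/∂V − V^{2/3}(∂H/∂pˢ)·γm(∂H/∂pˢ)
    + (3/β)Σᵢγᵢ
satisfies b ≤ −(λ/3)V²(∂H/∂V)² + C'(H+1) − V^{2/3}(∂H/∂pˢ)·γm(∂H/∂pˢ) with
C' = λβ⁻¹C + 3λβ⁻² + (3/β)Σᵢγᵢ. -/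
theorem stmt_16 (n : ℕ) (lam β C Vδ V HV dH d2H : ℝ)
    (γ m : Fin n → ℝ) (a : Fin n → Fin 3 → ℝ)
    (hlam : 0 < lam) (hβ : 0 < β) (hC : 0 ≤ C)
    (hγ : ∀ i, 0 < γ i) (hm : ∀ i, 0 < m i)
    (hVδ : 0 < Vδ) (hV : Vδ ≤ V)
    (hHV : 0 ≤ HV)
    (hass : V^2 * |d2H| ≤ (β/3) * V^2 * dH^2 + C * (HV + 1))
    (b : ℝ)
    (hb : b = -lam * V^2 * (dH^2 - β⁻¹ * d2H) + 2 * lam * β⁻¹ * V * dH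
      - V ^ ((2:ℝ)/3) * (∑ i, ∑ j, γ i * m i * (a i j)^2)
      + (3/β) * ∑ i, γ i) :
    b ≤ -(lam/3) * V^2 * dH^2
      + (lam * β⁻¹ * C + 3 * lam * β⁻¹^2 + (3/β) * ∑ i, γ i) * (HV + 1)
      - V ^ ((2:ℝ)/3) * (∑ i, ∑ j, γ i * m i * (a i j)^2) := by
  subst hb
  set S : ℝ := ∑ i, γ i with hS
  have hSpos : 0 ≤ S := Finset.sum_nonneg fun i _ => (hγ i).le
  have hβinv : 0 < β⁻¹ := inv_pos.mpr hβ
  have h2 : V^2 * d2H ≤ (β/3) * V^2 * dH^2 + C * (HV + 1) := by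
    refine le_trans ?_ hass
    have := le_abs_self d2H
    nlinarith [sq_nonneg V]
  -- λβ⁻¹ · second-derivative bound
  have h3 : lam * β⁻¹ * (V^2 * d2H) ≤ lam * β⁻¹ * ((β/3) * V^2 * dH^2 + C * (HV + 1)) := by
    apply mul_le_mul_of_nonneg_left h2
    positivity
  have hβb : lam * β⁻¹ * ((β/3) * V^2 * dH^2) = (lam/3) * V^2 * dH^2 := by
    field_simp
  -- Young's inequality
  have hyoung : 2 * lam * β⁻¹ * V * dH ≤ (lam/3) * V^2 * dH^2 + 3 * lam * β⁻¹^2 := by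
    nlinarith [sq_nonneg (V * dH - 3 * β⁻¹), hlam.le]
  -- S ≤ S (HV+1)
  have hSle : (3/β) * S ≤ (3/β) * S * (HV + 1) := by
    nlinarith [mul_nonneg (div_nonneg (by norm_num : (0:ℝ) ≤ 3) hβ.le) hSpos]
  rw [mul_add, hβb] at h3
  have h4 : 3 * lam * β⁻¹^2 ≤ 3 * lam * β⁻¹^2 * (HV + 1) := by nlinarith [mul_pos hlam (pow_pos hβinv 2)]
  nlinarith [h3, hyoung, hSle, h4]
end
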